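/- For any finite simple graph G, the coefficient of x in the chromatic polynomial χ_G is odd if and only if G is connected and bipartite. -/

import Mathlib

attribute [local instance 10] Classical.propDecidable

/-- The finset of proper colorings of `G` with color set `Fin C`. -/
noncomputable def properColorings {V : Type} [Fintype V] (G : SimpleGraph V) (C : ℕ) :
    Finset (V → Fin C) :=
  Finset.univ.filter fun κ => ∀ u w, G.Adj u w → κ u ≠ κ w

/-- The number of proper colorings of `G` using `m` available colors. -/
noncomputable def ncol {V : Type} [Fintype V] (G : SimpleGraph V) (m : ℕ) : ℕ :=
  (properColorings G m).card

/-- `G` is bipartite: it contains no odd cycle. -/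
def NoOddCycle {V : Type} (G : SimpleGraph V) : Prop :=
  ∀ (a : V) (c : G.Walk a a), c.IsCycle → ¬ Odd c.length

/-!
For every integer polynomial, `χ(2) - χ(4) ≡ 2 [x]χ (mod 4)`. Adding a constant to a colouring
shows `4 ∣ χ(4)` when `V` is nonempty, so `[x]χ` is odd iff `χ(2) ≢ 0 (mod 4)`. Now `χ(2) = 0` if
`G` has an odd cycle; if `G` is disconnected, flipping the colours on the component of one vertex
and on the rest independently shows `4 ∣ χ(2)`; and a connected bipartite graph has exactly two
2-colourings.
-/

open SimpleGraph Finset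

namespace Polynomial

theorem sq_dvd_eval_sub_coeff {R : Type*} [CommRing R] (p : R[X]) (x : R) :
    x ^ 2 ∣ p.eval x - (p.coeff 0 + p.coeff 1 * x) := by
  have h : X ^ 2 ∣ p - (C (p.coeff 0) + C (p.coeff 1) * X) :=
    X_pow_dvd_iff.2 fun d hd => by interval_cases d <;> simp
  simpa using eval_dvd (x := x) h

end Polynomial

namespace SimpleGraph

variable {V : Type*} {G : SimpleGraph V}

theorem Reachable.eq_of_forall_adj_eq {α : Type*} {f : V → α}
    (hf : ∀ x y, G.Adj x y → f x = f y) {u v : V} (h : G.Reachable u v) : f u = f v := by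
  obtain ⟨p⟩ := h
  induction p with
  | nil => rfl
  | cons hxy _ ih => exact (hf _ _ hxy).trans ih

namespace Walk

theorem exists_loop_of_not_isPath {u v : V} (p : G.Walk u v) (hp : ¬p.IsPath) :
    ∃ (x : V) (a : G.Walk u x) (c : G.Walk x x) (b : G.Walk x v),
      ¬c.Nil ∧ p.length = a.length + c.length + b.length := by
  induction p with
  | nil => exact absurd IsPath.nil hp
  | @cons u w v h q ih =>
    by_cases hq : q.IsPath
    · have hu : u ∈ q.support := by simpa [cons_isPath_iff, hq] using hp
      refine ⟨u, nil, cons h (q.takeUntil u hu), q.dropUntil u hu, not_nil_cons, ?_⟩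
      have hsplit := congrArg length (q.take_spec hu)
      simp only [length_append] at hsplit
      simp only [length_nil, length_cons]
      omega
    · obtain ⟨x, a, c, b, hc, hlen⟩ := ih hq
      exact ⟨x, cons h a, c, b, hc, by simp only [length_cons]; omega⟩

/-- A repeated vertex splits an odd closed walk into two shorter closed walks, one of which is
odd; a closed walk without repeated vertices of odd length is a cycle, since `G` has no loops. -/
theorem exists_isCycle_odd_length {u : V} (p : G.Walk u u) (hp : Odd p.length) :
    ∃ (v : V) (c : G.Walk v v), c.IsCycle ∧ Odd c.length := by
  induction hn : p.length using Nat.strong_induction_on generalizing u with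
  | _ n ih =>
    subst hn
    cases p with
    | nil => simp at hp
    | cons h q =>
      by_cases hq : q.IsPath
      · refine ⟨u, cons h q, isCycle_iff_isPath_tail_and_le_length.2 ⟨by simpa using hq, ?_⟩, hp⟩
        have hq0 : q.length ≠ 0 := fun h0 => h.ne (eq_of_length_eq_zero h0).symm
        rw [Nat.odd_iff] at hp
        simp only [length_cons] at hp ⊢
        omega
      · obtain ⟨x, a, c, b, hc, hlen⟩ := q.exists_loop_of_not_isPath hq
        have hc0 : 0 < c.length := not_nil_iff_lt_length.1 hc
        have hrest : (b.append (cons h a)).length = a.length + b.length + 1 := by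
          simp only [length_append, length_cons]
          omega
        have hsum : (cons h q).length = c.length + (b.append (cons h a)).length := by
          rw [length_cons, hrest]
          omega
        rcases Nat.even_or_odd c.length with hce | hco
        · exact ih _ (by omega) (b.append (cons h a)) ((Nat.odd_add'.1 (hsum ▸ hp)).2 hce) rfl
        · exact ih c.length (by omega) c hco rfl

end Walk

end SimpleGraph

theorem noOddCycle_iff_colorable_two {V : Type} {G : SimpleGraph V} :
    NoOddCycle G ↔ G.Colorable 2 := by
  rw [two_colorable_iff_forall_loop_even]
  refine ⟨fun h u w => ?_, fun h a c _ hodd => Nat.not_even_iff_odd.2 hodd (h a c)⟩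
  by_contra hw
  obtain ⟨v, c, hc, hodd⟩ := w.exists_isCycle_odd_length (Nat.not_even_iff_odd.1 hw)
  exact h v c hc hodd

section Colorings

variable {V : Type} [Fintype V] {G : SimpleGraph V} {n : ℕ}

theorem mem_properColorings {κ : V → Fin n} :
    κ ∈ properColorings G n ↔ ∀ u w, G.Adj u w → κ u ≠ κ w := by
  simp [properColorings]

theorem colorable_iff_nonempty_properColorings :
    G.Colorable n ↔ (properColorings G n).Nonempty :=
  ⟨fun ⟨C⟩ => ⟨C, mem_properColorings.2 fun _ _ h => C.valid h⟩,
    fun ⟨κ, hκ⟩ => ⟨Coloring.mk κ fun h => mem_properColorings.1 hκ _ _ h⟩⟩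

theorem ncol_of_isEmpty [IsEmpty V] (G : SimpleGraph V) (m : ℕ) : ncol G m = 1 := by
  rw [ncol, eq_univ_of_forall fun κ => mem_properColorings.2 fun u => isEmptyElim u]
  exact Fintype.card_unique

theorem add_mem_properColorings [NeZero n] {κ : V → Fin n} (hκ : κ ∈ properColorings G n)
    {t : V → Fin n} (ht : ∀ u w, G.Adj u w → t u = t w) : κ + t ∈ properColorings G n :=
  mem_properColorings.2 fun u w h => by
    simpa [ht u w h] using mem_properColorings.1 hκ u w h

/-- Translation by `T (-b)` maps the fibre of `e` over `b` onto the fibre over `0`. -/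
theorem ncol_eq_card_mul_card_filter [NeZero n] {A : Type*} [AddGroup A] [Fintype A]
    [DecidableEq A] (T : A → V → Fin n) (hT : ∀ a u w, G.Adj u w → T a u = T a w)
    (hneg : ∀ a, T (-a) + T a = 0) (e : (V → Fin n) → A) (he : ∀ a κ, e (κ + T a) = e κ + a) :
    ncol G n = Fintype.card A * #{κ ∈ properColorings G n | e κ = 0} := by
  have hneg' : ∀ a, T a + T (-a) = 0 := fun a => by simpa using hneg (-a)
  have hfiber : ∀ b, #{κ ∈ properColorings G n | e κ = b} = #{κ ∈ properColorings G n | e κ = 0} :=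
    fun b => card_bij' (fun κ _ => κ + T (-b)) (fun κ _ => κ + T b)
      (fun κ hκ => by
        rw [mem_filter] at hκ ⊢
        exact ⟨add_mem_properColorings hκ.1 (hT (-b)), by rw [he, hκ.2, add_neg_cancel]⟩)
      (fun κ hκ => by
        rw [mem_filter] at hκ ⊢
        exact ⟨add_mem_properColorings hκ.1 (hT b), by rw [he, hκ.2, zero_add]⟩)
      (fun κ _ => by rw [add_assoc, hneg, add_zero])
      (fun κ _ => by rw [add_assoc, hneg', add_zero])
  rw [ncol, card_eq_sum_card_fiberwise (f := e) (t := univ) fun _ _ => mem_univ _,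
    sum_congr rfl fun b _ => hfiber b, sum_const, card_univ, smul_eq_mul]

theorem ncol_eq_mul_card_filter_apply_eq_zero [NeZero n] (v : V) :
    ncol G n = n * #{κ ∈ properColorings G n | κ v = 0} := by
  rw [ncol_eq_card_mul_card_filter (fun c _ => c) (fun _ _ _ _ => rfl)
    (fun c => funext fun _ => neg_add_cancel c) (· v) (fun _ _ => Pi.add_apply _ _ _),
    Fintype.card_fin]

theorem dvd_ncol [NeZero n] (v : V) : n ∣ ncol G n :=
  ⟨_, ncol_eq_mul_card_filter_apply_eq_zero v⟩

theorem sq_dvd_ncol_of_not_reachable [NeZero n] {u v : V} (huv : ¬G.Reachable u v) :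
    n ^ 2 ∣ ncol G n := by
  let T : Fin n × Fin n → V → Fin n := fun a w => if G.Reachable u w then a.1 else a.2
  have hT : ∀ a x y, G.Adj x y → T a x = T a y := fun a x y h => by
    simp only [T, show G.Reachable u x ↔ G.Reachable u y from
      ⟨fun r => r.trans h.reachable, fun r => r.trans h.symm.reachable⟩]
  have hneg : ∀ a, T (-a) + T a = 0 := fun a => funext fun w => by
    by_cases hw : G.Reachable u w <;> simp [T, hw]
  rw [ncol_eq_card_mul_card_filter T hT hneg (fun κ => (κ u, κ v))
    (fun a κ => by simp [T, huv, Prod.ext_iff]), Fintype.card_prod, Fintype.card_fin, ← sq]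
  exact dvd_mul_right _ _

theorem ncol_two_of_connected (hG : G.Connected) (h2 : G.Colorable 2) : ncol G 2 = 2 := by
  obtain ⟨v⟩ := hG.nonempty
  have hcount := ncol_eq_mul_card_filter_apply_eq_zero (G := G) (n := 2) v
  -- with two colours the difference of two proper colourings is constant along edges
  have hsub : ∀ a b c d : Fin 2, a ≠ b → c ≠ d → a - c = b - d := by decide
  have hunique : #{κ ∈ properColorings G 2 | κ v = 0} ≤ 1 := by
    refine card_le_one.2 fun κ hκ κ' hκ' => funext fun w => ?_
    simp only [mem_filter, mem_properColorings] at hκ hκ'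
    have hconst : κ w - κ' w = κ v - κ' v :=
      (hG w v).eq_of_forall_adj_eq (f := κ - κ') fun x y h =>
        hsub _ _ _ _ (hκ.1 x y h) (hκ'.1 x y h)
    rwa [hκ.2, hκ'.2, sub_zero, sub_eq_zero] at hconst
  have hpos : 0 < ncol G 2 := card_pos.2 (colorable_iff_nonempty_properColorings.1 h2)
  omega

theorem four_dvd_ncol_two_iff [Nonempty V] : 4 ∣ ncol G 2 ↔ ¬(G.Connected ∧ G.Colorable 2) := by
  refine ⟨fun h ⟨hG, h2⟩ => by rw [ncol_two_of_connected hG h2] at h; omega, fun h => ?_⟩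
  by_cases h2 : G.Colorable 2
  · have hpre : ¬G.Preconnected := fun hpre => h ⟨(connected_iff G).2 ⟨hpre, ‹_›⟩, h2⟩
    simp only [Preconnected, not_forall] at hpre
    obtain ⟨u, v, huv⟩ := hpre
    exact sq_dvd_ncol_of_not_reachable huv
  · rw [colorable_iff_nonempty_properColorings, not_nonempty_iff_eq_empty] at h2
    simp [ncol, h2]

end Colorings

/-- For any finite simple graph `G` with chromatic polynomial `χ`, the coefficient of `x`
in `χ` is odd if and only if `G` is connected and bipartite (contains no odd cycle). -/
theorem stmt8 {V : Type} [Fintype V] (G : SimpleGraph V)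
    (χ : Polynomial ℤ) (hχ : ∀ m : ℕ, 0 < m → χ.eval (m : ℤ) = ncol G m) :
    Odd (χ.coeff 1) ↔ (G.Connected ∧ NoOddCycle G) := by
  have h2 := χ.sq_dvd_eval_sub_coeff 2
  have h4 := χ.sq_dvd_eval_sub_coeff 4
  rw [show (2 : ℤ) = ((2 : ℕ) : ℤ) from rfl, hχ 2 two_pos] at h2
  rw [show (4 : ℤ) = ((4 : ℕ) : ℤ) from rfl, hχ 4 four_pos] at h4
  push_cast at h2 h4
  rw [noOddCycle_iff_colorable_two, Int.odd_iff]
  rcases isEmpty_or_nonempty V with hV | hV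
  · rw [ncol_of_isEmpty] at h2 h4
    simp only [iff_false_intro fun hG : G.Connected => isEmptyElim hG.nonempty.some, false_and,
      iff_false]
    omega
  · have h4' : 4 ∣ ncol G 4 := dvd_ncol hV.some
    rw [← not_not (a := _ ∧ _), ← four_dvd_ncol_two_iff]
    omega
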